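/- Suppose a is a positive semidefinite symmetric bilinear form on a normed real vector space V, V₀ a subspace, and there is a constant C_h > 0 such that ‖v‖² ≤ C_h² a(v,v) for all v ∈ V₀ (coercivity on V₀). If e = e_h + e_I with e_h ∈ V₀ and a(e, v) = 0 for all v ∈ V₀, then ‖e‖ ≤ C_h √(2 a(e_I,e_I)) + ‖e_I‖. -/
import Mathlib


theorem stmt_2 {V : Type*} [NormedAddCommGroup V] [NormedSpace ℝ V] (a : V → V → ℝ)
    (haddl : ∀ u v w : V, a (u + v) w = a u w + a v w)
    (hsmull : ∀ (c : ℝ) (u v : V), a (c • u) v = c * a u v)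
    (hsymm : ∀ u v : V, a u v = a v u)
    (hpsd : ∀ v : V, 0 ≤ a v v)
    (V₀ : Submodule ℝ V) (C_h : ℝ) (hC : 0 < C_h)
    (hcoer : ∀ v ∈ V₀, ‖v‖ ^ 2 ≤ C_h ^ 2 * a v v)
    (e e_h e_I : V)
    (hdecomp : e = e_h + e_I) (hmem : e_h ∈ V₀)
    (horth : ∀ v ∈ V₀, a e v = 0) :
    ‖e‖ ≤ C_h * Real.sqrt (2 * a e_I e_I) + ‖e_I‖ := by
  have h0 : a e e_h = 0 := horth e_h hmem
  have key1 : a e_h e_h + a e_I e_h = 0 := by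
    rw [← haddl, ← hdecomp, h0]
  have hee : a e e = a e_h e_I + a e_I e_I := by
    rw [hdecomp, haddl, hsymm e_h (e_h + e_I), hsymm e_I (e_h + e_I), haddl, haddl]
    have := horth e_h hmem
    rw [hdecomp] at this
    rw [haddl] at this
    linarith [hsymm e_h e_I, hsymm e_I e_h]
  have hle : a e_h e_h ≤ 2 * a e_I e_I := by
    have h1 := hpsd e
    have h2 := hpsd e_I
    have h3 : a e_h e_I = a e_I e_h := hsymm _ _
    linarith
  have hnorm : ‖e_h‖ ≤ C_h * Real.sqrt (2 * a e_I e_I) := by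
    have h4 : ‖e_h‖ ^ 2 ≤ (C_h * Real.sqrt (2 * a e_I e_I)) ^ 2 := by
      have hs : Real.sqrt (2 * a e_I e_I) ^ 2 = 2 * a e_I e_I :=
        Real.sq_sqrt (by linarith [hpsd e_I])
      have := hcoer e_h hmem
      calc ‖e_h‖ ^ 2 ≤ C_h ^ 2 * a e_h e_h := this
        _ ≤ C_h ^ 2 * (2 * a e_I e_I) := by nlinarith
        _ = (C_h * Real.sqrt (2 * a e_I e_I)) ^ 2 := by rw [mul_pow, hs]
    have hpos : 0 ≤ C_h * Real.sqrt (2 * a e_I e_I) :=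
      mul_nonneg hC.le (Real.sqrt_nonneg _)
    nlinarith [norm_nonneg e_h]
  calc ‖e‖ ≤ ‖e_h‖ + ‖e_I‖ := by rw [hdecomp]; exact norm_add_le _ _
    _ ≤ C_h * Real.sqrt (2 * a e_I e_I) + ‖e_I‖ := by linarith
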